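/- arXiv:2603.12627 — 2 statements merged into one kernel-verified Lean document; each statement's English description precedes it below -/
import Mathlib

section
/- For any real number a in (0,1) and integer T ≥ 2, if B̃ = ⌈log_{1/a}(log₂ T)⌉, then ⌈T^{1-a^{B̃}}⌉ ≥ T/2, and consequently ⌈T^{1-a^{B̃}}⌉ + ⌈T^{1-a^{B̃+1}}⌉ ≥ T. -/
/-!
Write `L = log₂ T ≥ 1`. Since `B ≥ log_{1/a} L`, we have `a ^ B * L ≤ 1`, hence
`T ^ (a ^ B) = 2 ^ (a ^ B * L) ≤ 2` and so `T ^ (1 - a ^ B) = T / T ^ (a ^ B) ≥ T / 2`.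
Because `a ^ (B + 1) ≤ a ^ B`, the next batch is at least as large, so two batches cover `T`.
-/

open Real

lemma pow_mul_le_one_of_logb_le {a x : ℝ} (ha : 0 < a) (ha1 : a < 1) (hx : 0 < x) {n : ℕ}
    (h : logb (1 / a) x ≤ n) : a ^ n * x ≤ 1 := by
  have hx_le : x ≤ (1 / a) ^ n := by
    rw [← rpow_natCast]
    exact (logb_le_iff_le_rpow (one_lt_one_div ha ha1) hx).1 h
  calc a ^ n * x ≤ a ^ n * (1 / a) ^ n := by gcongr
    _ = 1 := by rw [← mul_pow, mul_one_div_cancel ha.ne', one_pow]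

lemma rpow_le_two_of_mul_logb_le_one {x t : ℝ} (hx : 0 < x) (h : t * logb 2 x ≤ 1) :
    x ^ t ≤ 2 :=
  calc x ^ t = (2 : ℝ) ^ (logb 2 x * t) := by
        rw [rpow_mul zero_le_two, rpow_logb zero_lt_two (by norm_num) hx]
    _ ≤ (2 : ℝ) ^ (1 : ℝ) := rpow_le_rpow_of_exponent_le one_le_two (by linarith)
    _ = 2 := rpow_one 2

lemma div_two_le_rpow_one_sub {x t : ℝ} (hx : 0 < x) (h : x ^ t ≤ 2) :
    x / 2 ≤ x ^ (1 - t) := by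
  rw [rpow_sub hx, rpow_one]
  exact div_le_div_of_nonneg_left hx.le (rpow_pos_of_pos hx t) h

lemma div_two_le_rpow_one_sub_pow {a x : ℝ} (ha : 0 < a) (ha1 : a < 1) (hx : 1 < x) {n : ℕ}
    (hn : logb (1 / a) (logb 2 x) ≤ n) : x / 2 ≤ x ^ (1 - a ^ n) := by
  have hlog : 0 < logb 2 x := logb_pos one_lt_two hx
  exact div_two_le_rpow_one_sub (by linarith)
    (rpow_le_two_of_mul_logb_le_one (by linarith) (pow_mul_le_one_of_logb_le ha ha1 hlog hn))

lemma rpow_one_sub_pow_le_succ {a x : ℝ} (ha : 0 ≤ a) (ha1 : a ≤ 1) (hx : 1 ≤ x) (n : ℕ) :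
    x ^ (1 - a ^ n) ≤ x ^ (1 - a ^ (n + 1)) :=
  rpow_le_rpow_of_exponent_le hx (sub_le_sub_left (pow_le_pow_of_le_one ha ha1 n.le_succ) 1)

/-- For any `a ∈ (0,1)` and integer `T ≥ 2`, with `B̃ = ⌈log_{1/a}(log₂ T)⌉`,
we have `⌈T^{1-a^B̃}⌉ ≥ T/2`, and consequently
`⌈T^{1-a^B̃}⌉ + ⌈T^{1-a^{B̃+1}}⌉ ≥ T`. -/
theorem stmt0 (a : ℝ) (ha : 0 < a) (ha1 : a < 1) (T : ℕ) (hT : 2 ≤ T)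
    (B : ℕ) (hB : B = ⌈Real.logb (1 / a) (Real.logb 2 (T : ℝ))⌉₊) :
    ((⌈(T : ℝ) ^ (1 - a ^ B)⌉₊ : ℝ) ≥ (T : ℝ) / 2) ∧
    ((⌈(T : ℝ) ^ (1 - a ^ B)⌉₊ : ℝ) + (⌈(T : ℝ) ^ (1 - a ^ (B + 1))⌉₊ : ℝ) ≥ (T : ℝ)) := by
  have hT1 : (1 : ℝ) < T := by exact_mod_cast hT
  have hB_ge : logb (1 / a) (logb 2 T) ≤ B := hB ▸ Nat.le_ceil _
  have hfirst : (T : ℝ) / 2 ≤ ⌈(T : ℝ) ^ (1 - a ^ B)⌉₊ :=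
    (div_two_le_rpow_one_sub_pow ha ha1 hT1 hB_ge).trans (Nat.le_ceil _)
  have hsecond : (T : ℝ) / 2 ≤ ⌈(T : ℝ) ^ (1 - a ^ (B + 1))⌉₊ :=
    ((div_two_le_rpow_one_sub_pow ha ha1 hT1 hB_ge).trans
      (rpow_one_sub_pow_le_succ ha.le ha1.le hT1.le B)).trans (Nat.le_ceil _)
  exact ⟨hfirst, by linarith⟩
end

section
/- Let f : X → ℝ on a finite set X with valid confidence bounds L(y) ≤ f(y) ≤ U(y) where U(y) = μ(y) + √β σ(y) and L(y) = μ(y) - √β σ(y), and suppose σ(y) ≤ s for all y ∈ X with s > 0. Let x* maximize the robust value v(x) := min_{δ ∈ Δ(x)} f(x+δ) and suppose a point x satisfies min_{δ∈Δ(x)} U(x+δ) ≥ min_{δ∈Δ(x*)} L(x*+δ) (x is not eliminated). Then the robust regret satisfies v(x*) - v(x) ≤ 6√β · s. -/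
/-- Robust regret bound: with valid confidence bounds
`m - √β·sd ≤ f ≤ m + √β·sd` on a finite domain `X` closed under
perturbations, all posterior standard deviations at most `s`, `x*` maximizing
the robust value `v(x) = min_{δ∈Δ(x)} f(x+δ)`, and `x` not eliminated
(`min_{δ∈Δ(x)} UCB(x+δ) ≥ min_{δ∈Δ(x*)} LCB(x*+δ)`), one has
`v(x*) - v(x) ≤ 6√β·s`. -/
theorem stmt18 (d : ℕ) (X : Finset (Fin d → ℝ))
    (Δ : (Fin d → ℝ) → Finset (Fin d → ℝ)) (hΔ : ∀ x, (Δ x).Nonempty)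
    (hclosed : ∀ x ∈ X, ∀ δ ∈ Δ x, x + δ ∈ X)
    (f m sd : (Fin d → ℝ) → ℝ) (β s : ℝ) (hβ : 0 < β) (hs : 0 < s)
    (hconf : ∀ y ∈ X, m y - Real.sqrt β * sd y ≤ f y ∧ f y ≤ m y + Real.sqrt β * sd y)
    (hsd : ∀ y ∈ X, sd y ≤ s)
    (xstar x : Fin d → ℝ) (hxs : xstar ∈ X) (hx : x ∈ X)
    (hopt : ∀ x' ∈ X, (Δ x').inf' (hΔ x') (fun δ => f (x' + δ)) ≤
      (Δ xstar).inf' (hΔ xstar) (fun δ => f (xstar + δ)))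
    (hnelim : (Δ xstar).inf' (hΔ xstar)
        (fun δ => m (xstar + δ) - Real.sqrt β * sd (xstar + δ)) ≤
      (Δ x).inf' (hΔ x) (fun δ => m (x + δ) + Real.sqrt β * sd (x + δ))) :
    (Δ xstar).inf' (hΔ xstar) (fun δ => f (xstar + δ)) -
      (Δ x).inf' (hΔ x) (fun δ => f (x + δ)) ≤ 6 * Real.sqrt β * s := by

  set B := Real.sqrt β with hB
  have hB0 : 0 ≤ B := Real.sqrt_nonneg β
  -- min f(x*) ≤ min LCB(x*) + 2Bs
  obtain ⟨δ1, hδ1, hE1⟩ := Finset.exists_mem_eq_inf' (hΔ xstar)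
    (fun δ => m (xstar + δ) - B * sd (xstar + δ))
  obtain ⟨δ2, hδ2, hE2⟩ := Finset.exists_mem_eq_inf' (hΔ x)
    (fun δ => f (x + δ))
  have hmem1 : xstar + δ1 ∈ X := hclosed _ hxs _ hδ1
  have hmem2 : x + δ2 ∈ X := hclosed _ hx _ hδ2
  have h1 : (Δ xstar).inf' (hΔ xstar) (fun δ => f (xstar + δ)) ≤
      (Δ xstar).inf' (hΔ xstar) (fun δ => m (xstar + δ) - B * sd (xstar + δ)) + 2 * B * s := by
    rw [hE1]
    calc (Δ xstar).inf' (hΔ xstar) (fun δ => f (xstar + δ)) ≤ f (xstar + δ1) :=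
          Finset.inf'_le _ hδ1
      _ ≤ m (xstar + δ1) + B * sd (xstar + δ1) := (hconf _ hmem1).2
      _ ≤ m (xstar + δ1) - B * sd (xstar + δ1) + 2 * B * s := by
          have := hsd _ hmem1
          nlinarith [mul_le_mul_of_nonneg_left this hB0]
  have h2 : (Δ x).inf' (hΔ x) (fun δ => m (x + δ) + B * sd (x + δ)) ≤
      (Δ x).inf' (hΔ x) (fun δ => f (x + δ)) + 2 * B * s := by
    rw [hE2]
    calc (Δ x).inf' (hΔ x) (fun δ => m (x + δ) + B * sd (x + δ)) ≤
          m (x + δ2) + B * sd (x + δ2) := Finset.inf'_le _ hδ2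
      _ ≤ f (x + δ2) + 2 * B * s := by
          have h3 := (hconf _ hmem2).1
          have := hsd _ hmem2
          nlinarith [mul_le_mul_of_nonneg_left this hB0]
  have hBs : 0 ≤ B * s := mul_nonneg hB0 hs.le
  nlinarith [h1, h2, hnelim]
end
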